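/- arXiv:2110.09112 — 2 statements merged into one kernel-verified Lean document; each statement's English description precedes it below -/
import Mathlib

section
/- Let A ∈ ℚ^{n×n} be invertible, set B = A^{−1}, and assume b := [ℤ^n[B] : Bℤ^n[B]] is finite with b ≥ n. Then there exists a complete set of coset representatives ℰ ⊂ ℤ^n of the quotient group ℤ^n[B]/Bℤ^n[B] (i.e. ℰ contains exactly one element of each coset of Bℤ^n[B] in ℤ^n[B]) that contains n vectors c₁, …, c_n which are linearly independent over ℝ. -/
open Matrix

/-- `ℤ^n[M] = ⋃_{k≥1} (ℤ^n + Mℤ^n + ⋯ + M^{k-1}ℤ^n)`, the additive subgroup of `ℚ^n`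
generated by all vectors `M^j z` with `z ∈ ℤ^n`. -/
def intSpan (n : ℕ) (M : Matrix (Fin n) (Fin n) ℚ) : AddSubgroup (Fin n → ℚ) :=
  AddSubgroup.closure {x | ∃ (j : ℕ) (z : Fin n → ℤ), x = (M ^ j) *ᵥ fun i => (z i : ℚ)}

/-- The index `[ℤ^n[M] : Mℤ^n[M]]` of the additive subgroup `Mℤ^n[M]` in `ℤ^n[M]`. -/
noncomputable def idx (n : ℕ) (M : Matrix (Fin n) (Fin n) ℚ) : ℕ :=
  ((intSpan n M).map (Matrix.mulVecLin M).toAddMonoidHom).relIndex (intSpan n M)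

/-- `ℤ^n` as an additive subgroup of `ℚ^n`. -/
def intVecs (n : ℕ) : AddSubgroup (Fin n → ℚ) where
  carrier := {x | ∀ i, ∃ m : ℤ, x i = (m : ℚ)}
  zero_mem' := fun i => ⟨0, by simp⟩
  add_mem' := by
    intro a b ha hb i
    obtain ⟨ma, hma⟩ := ha i
    obtain ⟨mb, hmb⟩ := hb i
    exact ⟨ma + mb, by simp [hma, hmb]⟩
  neg_mem' := by
    intro a ha i
    obtain ⟨ma, hma⟩ := ha i
    exact ⟨-ma, by simp [hma]⟩

/-! Every coset of `Bℤ^n[B]` in `ℤ^n[B]` contains an integer vector, because `B^(j+1) z` already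
lies in `Bℤ^n[B]`. Since `b ≥ n`, pick integer representatives `s₁, …, sₙ` of `n` distinct cosets.
The index `b` kills the quotient, so `bℤ^n ⊆ Bℤ^n[B]` and `cᵢ = sᵢ + b m eᵢ` lies in the coset of
`sᵢ` for every `m ∈ ℕ`; as `det (S + b m I)` is a nonzero polynomial in `m`, some `m` makes
the `cᵢ` linearly independent. Finally complete `{cᵢ}` by one integer vector from each remaining
coset. -/

open Function

theorem Set.InjOn.exists_superset_injOn_image_eq {α β : Type*} {f : α → β} {S T : Set α}
    (hT : T.InjOn f) (hTS : T ⊆ S) : ∃ E, T ⊆ E ∧ E ⊆ S ∧ E.InjOn f ∧ f '' E = f '' S := by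
  have hsurj : S.SurjOn f (f '' S \ f '' T) := fun _ hy => hy.1
  obtain ⟨U, hUS, hU, hfU⟩ := hsurj.exists_subset_injOn_image_eq
  have hdisj : Disjoint (f '' T) (f '' U) := hfU ▸ disjoint_sdiff_right
  refine ⟨T ∪ U, subset_union_left, union_subset hTS hUS, ?_, ?_⟩
  · exact (injOn_union (hdisj.of_image)).2 ⟨hT, hU, fun a ha b hb hab =>
      (hdisj.ne_of_mem (mem_image_of_mem f ha) (mem_image_of_mem f hb) hab).elim⟩
  · rw [image_union, hfU, union_sdiff_cancel (image_mono hTS)]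

theorem AddSubgroup.exists_sub_mem_of_le_sup {V : Type*} [AddCommGroup V] {G K H : AddSubgroup V}
    (hG : G ≤ K ⊔ H) {y : V} (hy : y ∈ G) : ∃ k ∈ K, y - k ∈ H := by
  obtain ⟨k, hk, h, hh, rfl⟩ := AddSubgroup.mem_sup.1 (hG hy)
  exact ⟨k, hk, by simpa using hh⟩

theorem AddSubgroup.exists_transversal_superset {V : Type*} [AddCommGroup V]
    {G K H : AddSubgroup V} (hG : G ≤ K ⊔ H) {T : Set V} (hTK : T ⊆ K)
    (hT : T.InjOn (QuotientAddGroup.mk : V → V ⧸ H)) :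
    ∃ E, T ⊆ E ∧ E ⊆ K ∧ ∀ y ∈ G, ∃! e, e ∈ E ∧ y - e ∈ H := by
  obtain ⟨E, hTE, hEK, hE, himage⟩ := hT.exists_superset_injOn_image_eq hTK
  refine ⟨E, hTE, hEK, fun y hy => ?_⟩
  obtain ⟨k, hk, hyk⟩ := exists_sub_mem_of_le_sup hG hy
  rw [← QuotientAddGroup.eq_iff_sub_mem] at hyk
  obtain ⟨e, he, hek⟩ : (k : V ⧸ H) ∈ QuotientAddGroup.mk '' E := himage ▸ Set.mem_image_of_mem _ hk
  refine ⟨e, ⟨he, QuotientAddGroup.eq_iff_sub_mem.1 (hyk.trans hek.symm)⟩, ?_⟩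
  rintro e' ⟨he', hye'⟩
  rw [← QuotientAddGroup.eq_iff_sub_mem] at hye'
  exact hE he' he (by rw [← hye', hyk, hek])

theorem Matrix.exists_det_add_smul_one_ne_zero {ι K : Type*} [Fintype ι] [DecidableEq ι]
    [CommRing K] [IsDomain K] (S : Matrix ι ι K) {s : Set K} (hs : s.Infinite) :
    ∃ t ∈ s, (S + t • 1).det ≠ 0 := by
  have hroots := Polynomial.finite_setOfPred_isRoot (-S).charpoly_monic.ne_zero
  obtain ⟨t, hts, ht⟩ := (hs.sdiff hroots).nonempty
  refine ⟨t, hts, ?_⟩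
  simpa [Matrix.eval_charpoly, Matrix.smul_one_eq_diagonal, add_comm] using ht

theorem Matrix.linearIndependent_rows_map_of_det_ne_zero {ι K L : Type*} [Fintype ι]
    [DecidableEq ι] [Field K] [CommRing L] [IsDomain L] (f : K →+* L) {C : Matrix ι ι K}
    (hC : C.det ≠ 0) : LinearIndependent L fun i => C.map f i := by
  apply Matrix.linearIndependent_rows_of_det_ne_zero
  rwa [← RingHom.mapMatrix_apply, ← RingHom.map_det, map_ne_zero]

theorem AddSubgroup.exists_injective_mk_of_le_relIndex {V : Type*} [AddCommGroup V]
    {G H : AddSubgroup V} {m : ℕ} (hfin : H.relIndex G ≠ 0) (hm : m ≤ H.relIndex G) :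
    ∃ g : Fin m → V, (∀ i, g i ∈ G) ∧ Injective fun i => (g i : V ⧸ H) := by
  have : Finite (G ⧸ H.addSubgroupOf G) := Nat.finite_of_card_ne_zero hfin
  let _ := Fintype.ofFinite (G ⧸ H.addSubgroupOf G)
  obtain ⟨ι⟩ := Function.Embedding.nonempty_of_card_le (α := Fin m) (β := G ⧸ H.addSubgroupOf G)
    (by rwa [Fintype.card_fin, ← Nat.card_eq_fintype_card])
  refine ⟨fun i => (ι i).out, fun i => (ι i).out.2, fun i j hij => ι.injective ?_⟩
  rw [← QuotientAddGroup.out_eq' (ι i), ← QuotientAddGroup.out_eq' (ι j),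
    QuotientAddGroup.eq_iff_sub_mem, AddSubgroup.mem_addSubgroupOf]
  exact QuotientAddGroup.eq_iff_sub_mem.1 hij

section IntSpan

variable {n : ℕ} (M : Matrix (Fin n) (Fin n) ℚ)

theorem intVecs_le_intSpan : intVecs n ≤ intSpan n M := by
  intro x hx
  choose z hz using hx
  exact AddSubgroup.subset_closure ⟨0, z, by simp [← funext hz]⟩

theorem intSpan_le_intVecs_sup_map :
    intSpan n M ≤ intVecs n ⊔ (intSpan n M).map (Matrix.mulVecLin M).toAddMonoidHom := by
  refine (AddSubgroup.closure_le _).2 ?_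
  rintro _ ⟨j, z, rfl⟩
  cases j with
  | zero => exact AddSubgroup.mem_sup_left fun i => ⟨z i, by simp⟩
  | succ j =>
    refine AddSubgroup.mem_sup_right ⟨M ^ j *ᵥ fun i => (z i : ℚ),
      AddSubgroup.subset_closure ⟨j, z, rfl⟩, ?_⟩
    simp [pow_succ', Matrix.mulVec_mulVec]

end IntSpan

theorem exists_linearIndependent_intVecs_sub_mem {n b : ℕ} {H : AddSubgroup (Fin n → ℚ)}
    (hb : b ≠ 0) (hbH : ∀ z ∈ intVecs n, b • z ∈ H) {s : Fin n → Fin n → ℚ}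
    (hs : ∀ i, s i ∈ intVecs n) :
    ∃ c : Fin n → Fin n → ℚ, (∀ i, c i ∈ intVecs n) ∧ (∀ i, c i - s i ∈ H) ∧
      LinearIndependent ℝ fun i j => (c i j : ℝ) := by
  have hinj : Injective fun m : ℕ => ((b * m : ℕ) : ℚ) :=
    Nat.cast_injective.comp (mul_right_injective₀ hb)
  obtain ⟨_, ⟨m, rfl⟩, hdet⟩ :=
    (Matrix.of s).exists_det_add_smul_one_ne_zero (Set.infinite_range_of_injective hinj)
  set C := Matrix.of s + ((b * m : ℕ) : ℚ) • 1
  have hone : ∀ i, (1 : Matrix (Fin n) (Fin n) ℚ) i ∈ intVecs n := fun i j =>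
    ⟨if i = j then 1 else 0, by rw [Matrix.one_apply]; split_ifs <;> simp⟩
  have hrow : ∀ i, C i - s i = b • m • (1 : Matrix (Fin n) (Fin n) ℚ) i := by
    intro i
    ext j
    simp [C, mul_assoc]
  refine ⟨C, fun i => ?_, fun i => ?_,
    Matrix.linearIndependent_rows_map_of_det_ne_zero (Rat.castHom ℝ) hdet⟩
  · rw [← sub_add_cancel (C i) (s i), hrow]
    exact add_mem (nsmul_mem (nsmul_mem (hone i) m) b) (hs i)
  · rw [hrow]
    exact hbH _ (nsmul_mem (hone i) m)

theorem exists_linearIndependent_intVecs_injective_mk {n : ℕ} {G H : AddSubgroup (Fin n → ℚ)}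
    (hZG : intVecs n ≤ G) (hGZ : G ≤ intVecs n ⊔ H) (hfin : H.relIndex G ≠ 0)
    (hn : n ≤ H.relIndex G) :
    ∃ c : Fin n → Fin n → ℚ, (∀ i, c i ∈ intVecs n) ∧
      Injective (fun i => (c i : (Fin n → ℚ) ⧸ H)) ∧
      LinearIndependent ℝ fun i j => (c i j : ℝ) := by
  obtain ⟨g, hgG, hg⟩ := AddSubgroup.exists_injective_mk_of_le_relIndex hfin hn
  choose s hsZ hgs using fun i => AddSubgroup.exists_sub_mem_of_le_sup hGZ (hgG i)
  obtain ⟨c, hcZ, hcs, hc⟩ := exists_linearIndependent_intVecs_sub_mem hfin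
    (fun z hz => H.nsmul_relIndex_mem (hZG hz)) hsZ
  have hcg : ∀ i, (c i : (Fin n → ℚ) ⧸ H) = g i := fun i =>
    QuotientAddGroup.eq_iff_sub_mem.2 (by simpa using sub_mem (hcs i) (hgs i))
  refine ⟨c, hcZ, fun i j hij => hg ?_, hc⟩
  simpa only [hcg] using hij

theorem stmt15_general (n : ℕ) (A : Matrix (Fin n) (Fin n) ℚ)
    -- `b = [ℤ^n[B] : Bℤ^n[B]]` is finite (nonzero index) with `b ≥ n`, where `B = A⁻¹`
    (hfin : idx n A⁻¹ ≠ 0) (hbn : n ≤ idx n A⁻¹) :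
    ∃ E : Set (Fin n → ℚ),
      -- `E ⊆ ℤ^n`
      E ⊆ (intVecs n : Set (Fin n → ℚ)) ∧
      -- `E` is a complete set of coset representatives of `ℤ^n[B]/Bℤ^n[B]`
      (∀ y ∈ intSpan n A⁻¹, ∃! e, e ∈ E ∧
        y - e ∈ (intSpan n A⁻¹).map (Matrix.mulVecLin A⁻¹).toAddMonoidHom) ∧
      -- `E` contains `n` vectors that are linearly independent over `ℝ`
      (∃ c : Fin n → Fin n → ℚ, (∀ i, c i ∈ E) ∧
        LinearIndependent ℝ fun i => fun j => ((c i j : ℝ))) := by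
  have hGZ := intSpan_le_intVecs_sup_map A⁻¹
  obtain ⟨c, hcZ, hc_inj, hc_li⟩ :=
    exists_linearIndependent_intVecs_injective_mk (intVecs_le_intSpan A⁻¹) hGZ hfin hbn
  obtain ⟨E, hcE, hEZ, hE⟩ :=
    AddSubgroup.exists_transversal_superset hGZ (Set.range_subset_iff.2 hcZ) hc_inj.injOn_range
  exact ⟨E, hEZ, hE, c, fun i => hcE ⟨i, rfl⟩, hc_li⟩

theorem stmt15 (n : ℕ) (A : Matrix (Fin n) (Fin n) ℚ) (hA : IsUnit A.det)
    -- `b = [ℤ^n[B] : Bℤ^n[B]]` is finite (nonzero index) with `b ≥ n`, where `B = A⁻¹`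
    (hfin : idx n A⁻¹ ≠ 0) (hbn : n ≤ idx n A⁻¹) :
    ∃ E : Set (Fin n → ℚ),
      -- `E ⊆ ℤ^n`
      E ⊆ (intVecs n : Set (Fin n → ℚ)) ∧
      -- `E` is a complete set of coset representatives of `ℤ^n[B]/Bℤ^n[B]`
      (∀ y ∈ intSpan n A⁻¹, ∃! e, e ∈ E ∧
        y - e ∈ (intSpan n A⁻¹).map (Matrix.mulVecLin A⁻¹).toAddMonoidHom) ∧
      -- `E` contains `n` vectors that are linearly independent over `ℝ`
      (∃ c : Fin n → Fin n → ℚ, (∀ i, c i ∈ E) ∧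
        LinearIndependent ℝ fun i => fun j => ((c i j : ℝ))) :=
  stmt15_general n A hfin hbn
end

section
/- Let A ∈ ℝ^{n×n} be an expanding matrix, let ℛ₁, ℛ₂ ⊂ ℝ^n be finite nonempty sets, and for a finite nonempty 𝒟 ⊂ ℝ^n write F(A,𝒟) := { Σ_{j=1}^{∞} A^{−j} d_j : d_j ∈ 𝒟 for all j ≥ 1 }. Then F(A, ℛ₁ + A·ℛ₂) = F(A, ℛ₁ + ℛ₂) + ℛ₂, where ℛ₁ + A·ℛ₂ = { r₁ + A r₂ : r₁ ∈ ℛ₁, r₂ ∈ ℛ₂ }, ℛ₁ + ℛ₂ = { r₁ + r₂ : r₁ ∈ ℛ₁, r₂ ∈ ℛ₂ }, and the right-hand side is the Minkowski sum { x + r₂ : x ∈ F(A, ℛ₁ + ℛ₂), r₂ ∈ ℛ₂ }. -/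
open Matrix Pointwise

/-- A real matrix is expanding if all of its complex eigenvalues (the roots of its
characteristic polynomial over `ℂ`) have modulus strictly greater than `1`. -/
def IsExpanding {n : ℕ} (A : Matrix (Fin n) (Fin n) ℝ) : Prop :=
  ∀ μ : ℂ, (A.charpoly.map (algebraMap ℝ ℂ)).IsRoot μ → 1 < ‖μ‖

/-- The set `F(A,D) = { Σ_{j=1}^∞ A^{-j} d_j : d_j ∈ D }`. -/
noncomputable def tileF {n : ℕ} (A : Matrix (Fin n) (Fin n) ℝ) (D : Set (Fin n → ℝ)) :
    Set (Fin n → ℝ) :=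
  {x | ∃ d : ℕ → Fin n → ℝ, (∀ j, d j ∈ D) ∧ x = ∑' j : ℕ, (A⁻¹ ^ (j + 1)) *ᵥ d j}

/-! Writing `d_j = r_j + A s_j`, the factor `A` in `A^{-(j+1)} A s_j` lowers the exponent by one,
so `∑ A^{-(j+1)} (r_j + A s_j) = ∑ A^{-(j+1)} (r_j + s_{j+1}) + s_0`: the digit sequence from
`ℛ₁ + Aℛ₂` is traded for one from `ℛ₁ + ℛ₂` plus the leftover `s_0 ∈ ℛ₂`, and conversely any
`s_0` can be prepended. The rearrangement is legitimate because all three series converge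
absolutely: the spectral radius of `A⁻¹` is `< 1`, so by Gelfand's formula `‖A^{-k}‖` decays
geometrically. -/

open Filter Bornology

section SpectralRadius

variable {𝔸 : Type*} [NormedRing 𝔸] [NormedAlgebra ℂ 𝔸] [CompleteSpace 𝔸]

theorem summable_norm_pow_of_spectralRadius_lt_one {a : 𝔸} (ha : spectralRadius ℂ a < 1) :
    Summable fun k : ℕ => ‖a ^ k‖ := by
  obtain ⟨r, hρr, hr1⟩ := ENNReal.lt_iff_exists_nnreal_btwn.1 ha
  have hr1' : (r : ℝ) < 1 := by exact_mod_cast hr1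
  refine .of_norm_bounded_eventually_nat (summable_geometric_of_lt_one r.coe_nonneg hr1') ?_
  have hgelfand := spectrum.pow_nnnorm_pow_one_div_tendsto_nhds_spectralRadius a
  filter_upwards [hgelfand.eventually_lt_const hρr, eventually_ne_atTop 0] with k hk hk0
  rw [one_div] at hk
  have hpow := ENNReal.pow_lt_pow_left hk0 hk
  rw [ENNReal.rpow_inv_natCast_pow hk0] at hpow
  rw [norm_norm]
  exact_mod_cast hpow.le

end SpectralRadius

section Expanding

attribute [local instance] Matrix.linftyOpNormedAddCommGroup Matrix.linftyOpNormedRing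
  Matrix.linftyOpNormedAlgebra

variable {n : ℕ} {A : Matrix (Fin n) (Fin n) ℝ}

theorem IsExpanding.isUnit_det (hA : IsExpanding A) : IsUnit A.det := by
  refine isUnit_iff_ne_zero.2 fun h0 => ?_
  have hcoeff : A.charpoly.coeff 0 = 0 :=
    (mul_eq_zero.1 (A.det_eq_sign_charpoly_coeff ▸ h0)).resolve_left (by simp)
  have hroot : (A.charpoly.map (algebraMap ℝ ℂ)).IsRoot 0 := by
    rw [Polynomial.IsRoot, Polynomial.eval_zero_map, ← Polynomial.coeff_zero_eq_eval_zero, hcoeff,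
      map_zero]
  exact (hA 0 hroot).not_ge (by simp)

theorem IsExpanding.spectralRadius_map_inv_lt_one (hA : IsExpanding A) :
    spectralRadius ℂ ((A⁻¹).map (algebraMap ℝ ℂ)) < 1 := by
  rcases isEmpty_or_nonempty (Fin n) with _ | _
  · simp [spectrum.SpectralRadius.of_subsingleton]
  let u : (Matrix (Fin n) (Fin n) ℂ)ˣ :=
    { val := A.map (algebraMap ℝ ℂ)
      inv := (A⁻¹).map (algebraMap ℝ ℂ)
      val_inv := by rw [← Matrix.map_mul, A.mul_nonsing_inv hA.isUnit_det]; simp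
      inv_val := by rw [← Matrix.map_mul, A.nonsing_inv_mul hA.isUnit_det]; simp }
  refine mod_cast spectrum.spectralRadius_lt_of_forall_lt _ (r := 1) fun μ hμ => ?_
  have hμ_inv : μ⁻¹ ∈ spectrum ℂ (A.map (algebraMap ℝ ℂ)) := by
    rw [← Set.mem_inv, spectrum.map_inv u]
    exact hμ
  rw [Matrix.mem_spectrum_iff_isRoot_charpoly, Matrix.charpoly_map] at hμ_inv
  have h1 : 1 < ‖μ‖⁻¹ := norm_inv μ ▸ hA _ hμ_inv
  have h2 : ‖μ‖ < 1 := lt_of_not_ge fun h => h1.not_ge (inv_le_one_of_one_le₀ h)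
  exact_mod_cast h2

theorem IsExpanding.summable_norm_inv_pow (hA : IsExpanding A) :
    Summable fun k : ℕ => ‖A⁻¹ ^ k‖ := by
  refine (summable_norm_pow_of_spectralRadius_lt_one hA.spectralRadius_map_inv_lt_one).congr
    fun k => ?_
  rw [← Matrix.map_pow _ (algebraMap ℝ ℂ)]
  simp [Matrix.linfty_opNorm_def]

theorem IsExpanding.summable_inv_pow_add_mulVec (hA : IsExpanding A) (m : ℕ)
    {v : ℕ → Fin n → ℝ} (hv : IsBounded (Set.range v)) :
    Summable fun j => (A⁻¹ ^ (j + m)) *ᵥ v j := by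
  obtain ⟨C, hC⟩ := hv.exists_norm_le
  refine .of_norm_bounded (((summable_nat_add_iff m).2 hA.summable_norm_inv_pow).mul_right C)
    fun j => ?_
  exact (Matrix.linfty_opNorm_mulVec _ _).trans
    (mul_le_mul_of_nonneg_left (hC _ ⟨j, rfl⟩) (norm_nonneg _))

theorem IsExpanding.tsum_inv_pow_succ_mulVec_add_mulVec (hA : IsExpanding A)
    {a b : ℕ → Fin n → ℝ} (ha : IsBounded (Set.range a)) (hb : IsBounded (Set.range b)) :
    ∑' j, (A⁻¹ ^ (j + 1)) *ᵥ (a j + A *ᵥ b j) =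
      (∑' j, (A⁻¹ ^ (j + 1)) *ᵥ (a j + b (j + 1))) + b 0 := by
  have hcancel (j : ℕ) : (A⁻¹ ^ (j + 1)) *ᵥ (A *ᵥ b j) = (A⁻¹ ^ j) *ᵥ b j := by
    rw [Matrix.mulVec_mulVec, pow_succ, mul_assoc, A.nonsing_inv_mul hA.isUnit_det, mul_one]
  have hsa := hA.summable_inv_pow_add_mulVec 1 ha
  have hsb : Summable fun j => (A⁻¹ ^ j) *ᵥ b j := by
    simpa using hA.summable_inv_pow_add_mulVec 0 hb
  simp only [Matrix.mulVec_add, hcancel]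
  rw [hsa.tsum_add hsb, hsa.tsum_add ((summable_nat_add_iff 1).2 hsb), hsb.tsum_eq_zero_add,
    pow_zero, Matrix.one_mulVec]
  abel

end Expanding

theorem mem_tileF_image2 {n : ℕ} {A : Matrix (Fin n) (Fin n) ℝ} {X Y : Type*}
    (f : X → Y → Fin n → ℝ) (S : Set X) (T : Set Y) {x : Fin n → ℝ} :
    x ∈ tileF A (Set.image2 f S T) ↔
      ∃ (a : ℕ → X) (b : ℕ → Y), (∀ j, a j ∈ S) ∧ (∀ j, b j ∈ T) ∧
        x = ∑' j, (A⁻¹ ^ (j + 1)) *ᵥ f (a j) (b j) := by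
  constructor
  · rintro ⟨d, hd, rfl⟩
    choose a ha b hb hab using hd
    exact ⟨a, b, ha, hb, by simp only [hab]⟩
  · rintro ⟨a, b, ha, hb, rfl⟩
    exact ⟨fun j => f (a j) (b j), fun j => Set.mem_image2_of_mem (ha j) (hb j), rfl⟩

theorem stmt17_general (n : ℕ) (A : Matrix (Fin n) (Fin n) ℝ) (hA : IsExpanding A)
    (R1 R2 : Set (Fin n → ℝ)) (h1fin : R1.Finite)
    (h2fin : R2.Finite) :
    tileF A (R1 + (A *ᵥ ·) '' R2) = tileF A (R1 + R2) + R2 := by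
  have bdd {R : Set (Fin n → ℝ)} (hR : R.Finite) {v : ℕ → Fin n → ℝ} (hv : ∀ j, v j ∈ R) :
      IsBounded (Set.range v) :=
    hR.isBounded.subset (Set.range_subset_iff.2 hv)
  ext x
  simp only [← Set.image2_add, Set.image2_image_right, Set.mem_image2, mem_tileF_image2]
  constructor
  · rintro ⟨a, b, ha, hb, rfl⟩
    refine ⟨_, ⟨a, fun j => b (j + 1), ha, fun j => hb _, rfl⟩, b 0, hb 0, ?_⟩
    exact (hA.tsum_inv_pow_succ_mulVec_add_mulVec (bdd h1fin ha) (bdd h2fin hb)).symm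
  · rintro ⟨_, ⟨a, b, ha, hb, rfl⟩, s, hs, rfl⟩
    let b' : ℕ → Fin n → ℝ := fun | 0 => s | j + 1 => b j
    have hb' : ∀ j, b' j ∈ R2 := by
      rintro (_ | j)
      exacts [hs, hb j]
    exact ⟨a, b', ha, hb',
      (hA.tsum_inv_pow_succ_mulVec_add_mulVec (bdd h1fin ha) (bdd h2fin hb')).symm⟩

theorem stmt17 (n : ℕ) (A : Matrix (Fin n) (Fin n) ℝ) (hA : IsExpanding A)
    (R1 R2 : Set (Fin n → ℝ)) (h1fin : R1.Finite) (h1ne : R1.Nonempty)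
    (h2fin : R2.Finite) (h2ne : R2.Nonempty) :
    tileF A (R1 + (A *ᵥ ·) '' R2) = tileF A (R1 + R2) + R2 :=
  stmt17_general n A hA R1 R2 h1fin h2fin
end
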